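/- arXiv:1906.07205 — 2 statements merged into one kernel-verified Lean document; each statement's English description precedes it below -/
import Mathlib

section
/- Let G be a group and let s_0, s_1, ..., s_n be a finite list of elements of G. The following are equivalent: (1) the consecutive quotients s_0⁻¹s_1, s_1⁻¹s_2, ..., s_{n-1}⁻¹s_n pairwise commute; (2) the subgroup of G generated by all quotients s_i⁻¹s_j (for 0 ≤ i, j ≤ n) is abelian; (3) the set {s_0, ..., s_n} is contained in a single left coset of some abelian subgroup of G. -/
/-! If `range s ⊆ g • A`, every quotient `(s i)⁻¹ * s j` lies in `A`. Conversely, the consecutive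
quotients generate an abelian subgroup `A`, and `(s 0)⁻¹ * s i` telescopes into a product of
consecutive quotients, so `range s ⊆ s 0 • A`. -/

open Pointwise

def AffinelyCommutative {G : Type*} [Group G] (S : Set G) : Prop :=
  ∃ (g : G) (A : Subgroup G), IsMulCommutative A ∧ S ⊆ g • (A : Set G)

namespace Subgroup

variable {G : Type*} [Group G]

theorem isMulCommutative_of_le {H K : Subgroup G} (hle : H ≤ K) [IsMulCommutative K] :
    IsMulCommutative H :=
  .of_setLike_mul_comm fun _ ha _ hb ↦ setLike_mul_comm (hle ha) (hle hb)

theorem inv_mul_mem_of_mem_leftCoset {A : Subgroup G} {g x y : G}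
    (hx : x ∈ g • (A : Set G)) (hy : y ∈ g • (A : Set G)) : x⁻¹ * y ∈ A := by
  rw [mem_leftCoset_iff] at hx hy
  simpa [mul_assoc] using mul_mem (inv_mem hx) hy

theorem inv_mul_mem_of_forall_succ {H : Subgroup G} {n : ℕ} {s : Fin (n + 1) → G}
    (hs : ∀ i : Fin n, (s i.castSucc)⁻¹ * s i.succ ∈ H) (i : Fin (n + 1)) :
    (s 0)⁻¹ * s i ∈ H := by
  induction i using Fin.induction with
  | zero => simp
  | succ i ih =>
    have htelescope :
        (s 0)⁻¹ * s i.succ = ((s 0)⁻¹ * s i.castSucc) * ((s i.castSucc)⁻¹ * s i.succ) := by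
      group
    rw [htelescope]
    exact mul_mem ih (hs i)

theorem range_subset_leftCoset_of_forall_succ {H : Subgroup G} {n : ℕ} {s : Fin (n + 1) → G}
    (hs : ∀ i : Fin n, (s i.castSucc)⁻¹ * s i.succ ∈ H) :
    Set.range s ⊆ s 0 • (H : Set G) := by
  rintro _ ⟨i, rfl⟩
  exact (mem_leftCoset_iff _).2 (inv_mul_mem_of_forall_succ hs i)

end Subgroup

/-- For a finite list `s 0, …, s n` of elements of a group `G`, the following are
equivalent: (1) the consecutive quotients `(s i)⁻¹ * s (i+1)` pairwise commute;
(2) the subgroup generated by all quotients `(s i)⁻¹ * s j` is abelian;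
(3) the set `{s 0, …, s n}` is contained in a single left coset of an abelian subgroup. -/
theorem affinelyCommutative_tfae {G : Type*} [Group G] (n : ℕ) (s : Fin (n + 1) → G) :
    List.TFAE
      [∀ i j : Fin n, Commute ((s i.castSucc)⁻¹ * s i.succ) ((s j.castSucc)⁻¹ * s j.succ),
       IsMulCommutative (Subgroup.closure {x : G | ∃ i j : Fin (n + 1), x = (s i)⁻¹ * s j}),
       ∃ (g : G) (A : Subgroup G), IsMulCommutative A ∧ Set.range s ⊆ g • (A : Set G)] := by
  tfae_have 1 → 3 := fun h ↦ by
    let T : Set G := {x | ∃ i : Fin n, x = (s i.castSucc)⁻¹ * s i.succ}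
    refine ⟨s 0, Subgroup.closure T, Subgroup.isMulCommutative_closure ?_, ?_⟩
    · rintro _ ⟨i, rfl⟩ _ ⟨j, rfl⟩
      exact h i j
    · exact Subgroup.range_subset_leftCoset_of_forall_succ fun i ↦
        Subgroup.subset_closure ⟨i, rfl⟩
  tfae_have 3 → 2 := fun ⟨g, A, _, hsub⟩ ↦ by
    refine Subgroup.isMulCommutative_of_le (K := A) ((Subgroup.closure_le _).2 ?_)
    rintro _ ⟨i, j, rfl⟩
    exact Subgroup.inv_mul_mem_of_mem_leftCoset (hsub ⟨i, rfl⟩) (hsub ⟨j, rfl⟩)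
  tfae_have 2 → 1 := fun h i j ↦
    isMulCommutative_iff_of_setLike.mp h _ (Subgroup.subset_closure ⟨i.castSucc, i.succ, rfl⟩) _
      (Subgroup.subset_closure ⟨j.castSucc, j.succ, rfl⟩)
  tfae_finish
end

section
/- Let G be a finite group. A subset S ⊆ G is maximal (with respect to inclusion) among the affinely commutative subsets of G if and only if S is a left coset of a maximal abelian subgroup of G (i.e., an abelian subgroup of G not properly contained in any other abelian subgroup of G). -/
/-!
Containment of left cosets `g • A ⊆ h • B` forces `A ≤ B` and `h • B = g • B`. So a set inside
`g • A` stays inside `g • B` for a maximal abelian `B ≥ A` (Zorn), and a coset of a maximal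
abelian subgroup can only sit inside a coset of an abelian subgroup if the two cosets coincide.
-/

open Pointwise

namespace Subgroup

variable {G : Type*} [Group G]

theorem exists_le_maximal_isMulCommutative (A : Subgroup G) [IsMulCommutative A] :
    ∃ B : Subgroup G, A ≤ B ∧ Maximal (fun B : Subgroup G ↦ IsMulCommutative B) B := by
  refine zorn_le_nonempty₀ {B : Subgroup G | IsMulCommutative B} ?_ A ‹_›
  intro c hc hchain B hB
  have : Nonempty c := ⟨⟨B, hB⟩⟩
  have : ∀ C : c, IsMulCommutative (C : Subgroup G) := fun C ↦ hc C.2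
  exact ⟨⨆ C : c, (C : Subgroup G), isMulCommutative_iSup hchain.directed,
    fun C hC ↦ le_iSup (fun C : c ↦ (C : Subgroup G)) ⟨C, hC⟩⟩

theorem le_and_smul_coe_eq_of_smul_coe_subset {A B : Subgroup G} {g h : G}
    (hsub : g • (A : Set G) ⊆ h • (B : Set G)) :
    A ≤ B ∧ h • (B : Set G) = g • (B : Set G) := by
  have hgB : h • (B : Set G) = g • (B : Set G) :=
    (leftCoset_eq_iff B).2 <| (mem_leftCoset_iff h).1 <| hsub <| by
      simpa using mem_leftCoset g A.one_mem
  rw [hgB, Set.smul_set_subset_smul_set_iff] at hsub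
  exact ⟨hsub, hgB⟩

end Subgroup

theorem maximal_affinelyCommutative_iff_coset_maximal_abelian_general {G : Type*} [Group G]
    (S : Set G) :
    (AffinelyCommutative S ∧ ∀ T : Set G, AffinelyCommutative T → S ⊆ T → S = T) ↔
    (∃ (g : G) (A : Subgroup G), IsMulCommutative A ∧
      (∀ B : Subgroup G, IsMulCommutative B → A ≤ B → A = B) ∧ S = g • (A : Set G)) := by
  constructor
  · rintro ⟨⟨g, A, hA, hSA⟩, hmax⟩
    obtain ⟨B, hAB, hB⟩ := A.exists_le_maximal_isMulCommutative
    refine ⟨g, B, hB.prop, fun C hC hBC ↦ le_antisymm hBC (hB.2 hC hBC), ?_⟩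
    exact hmax _ ⟨g, B, hB.prop, subset_rfl⟩ (hSA.trans (Set.smul_set_mono hAB))
  · rintro ⟨g, A, hA, hAmax, rfl⟩
    refine ⟨⟨g, A, hA, subset_rfl⟩, ?_⟩
    rintro T ⟨h, B, hB, hTB⟩ hAT
    obtain ⟨hAB, hBg⟩ := Subgroup.le_and_smul_coe_eq_of_smul_coe_subset (hAT.trans hTB)
    obtain rfl := hAmax B hB hAB
    exact hAT.antisymm (hBg ▸ hTB)

/-- In a finite group `G`, a subset `S` is maximal among affinely commutative subsets
if and only if it is a left coset of a maximal abelian subgroup of `G`. -/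
theorem maximal_affinelyCommutative_iff_coset_maximal_abelian {G : Type*} [Group G]
    [Finite G] (S : Set G) :
    (AffinelyCommutative S ∧ ∀ T : Set G, AffinelyCommutative T → S ⊆ T → S = T) ↔
    (∃ (g : G) (A : Subgroup G), IsMulCommutative A ∧
      (∀ B : Subgroup G, IsMulCommutative B → A ≤ B → A = B) ∧ S = g • (A : Set G)) :=
  maximal_affinelyCommutative_iff_coset_maximal_abelian_general S
end
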